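/- arXiv:1706.03345 — 2 statements merged into one kernel-verified Lean document; each statement's English description precedes it below -/
import Mathlib

section
/- For the CRTBP automatic differentiation map R(u¹,u²,u³,u⁴) = (u¹,u²,u³,u⁴, ((u¹+μ)²+(u³)²)^{-1/2}, ((u¹-1+μ)²+(u³)²)^{-1/2}) and the polynomial vector field g on ℝ⁶ given in the paper, the projection onto the first four coordinates satisfies π₄(g(R(u))) = ĝ(u) for all u away from the collision set, where ĝ is the original non-polynomial CRTBP vector field. -/
/-- The original (non-polynomial) planar CRTBP vector field. -/
noncomputable def crtbpHat (μ : ℝ) (u : Fin 4 → ℝ) : Fin 4 → ℝ :=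
  ![u 1,
    2 * u 3 + u 0 - (1 - μ) * (u 0 + μ) / Real.sqrt ((u 0 + μ) ^ 2 + (u 2) ^ 2) ^ 3
      - μ * (u 0 - 1 + μ) / Real.sqrt ((u 0 - 1 + μ) ^ 2 + (u 2) ^ 2) ^ 3,
    u 3,
    -2 * u 1 + u 2 - (1 - μ) * u 2 / Real.sqrt ((u 0 + μ) ^ 2 + (u 2) ^ 2) ^ 3
      - μ * u 2 / Real.sqrt ((u 0 - 1 + μ) ^ 2 + (u 2) ^ 2) ^ 3]

/-- The polynomial CRTBP vector field obtained by automatic differentiation. -/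
def crtbpPoly (μ : ℝ) (v : Fin 6 → ℝ) : Fin 6 → ℝ :=
  ![v 1,
    2 * v 3 + v 0 - (1 - μ) * (v 0 + μ) * (v 4) ^ 3 - μ * (v 5) ^ 3 * (v 0 - 1 + μ),
    v 3,
    -2 * v 1 + v 2 - (1 - μ) * v 2 * (v 4) ^ 3 - μ * v 2 * (v 5) ^ 3,
    -(v 4) ^ 3 * ((v 0 + μ) * v 1 + v 2 * v 3),
    -(v 5) ^ 3 * ((v 0 - 1 + μ) * v 1 + v 2 * v 3)]

/-- The CRTBP automatic differentiation map `R`. -/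
noncomputable def crtbpR (μ : ℝ) (u : Fin 4 → ℝ) : Fin 6 → ℝ :=
  ![u 0, u 1, u 2, u 3,
    1 / Real.sqrt ((u 0 + μ) ^ 2 + (u 2) ^ 2),
    1 / Real.sqrt ((u 0 - 1 + μ) ^ 2 + (u 2) ^ 2)]

/-- Projection onto the first four coordinates recovers the CRTBP vector field:
`π₄(g(R(u))) = ĝ(u)` away from the collision set. -/
theorem crtbp_projection_recovers_field
    (μ : ℝ) (hμ : μ ∈ Set.Ioo (0 : ℝ) 1) (u : Fin 4 → ℝ)
    (h1 : Real.sqrt ((u 0 + μ) ^ 2 + (u 2) ^ 2) ≠ 0)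
    (h2 : Real.sqrt ((u 0 - 1 + μ) ^ 2 + (u 2) ^ 2) ≠ 0) :
    ∀ i : Fin 4, crtbpPoly μ (crtbpR μ u) ⟨i.1, by omega⟩ = crtbpHat μ u i := by
  intro i
  fin_cases i <;>
    simp [crtbpPoly, crtbpR, crtbpHat, Matrix.cons_val_zero, Matrix.cons_val_succ,
      show (5:Fin 6) = Fin.succ (Fin.succ (Fin.succ (Fin.succ (Fin.succ 0)))) from rfl,
      show (4:Fin 6) = Fin.succ (Fin.succ (Fin.succ (Fin.succ 0))) from rfl] <;>
    field_simp <;> ring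
end

section
/- Equilateral triangle property of the CRFBP primaries: with masses m₁,m₂,m₃ > 0 summing to 1 and positions p₁, p₂, p₃ ∈ ℝ² given by the explicit formulas (x₁,y₁) = (-|K|√(m₂²+m₂m₃+m₃²)/K, 0), etc., the three mutual distances are equal: |p₁-p₂| = |p₂-p₃| = |p₁-p₃|, and the center of mass is the origin: m₁p₁ + m₂p₂ + m₃p₃ = 0. -/
/-!
Put `s = √(m₂² + m₂m₃ + m₃²)` and `ε = |K|/K = ±1`. The formulas reduce to
`p₁ = (-ε s, 0)`, `p₂ = (ε A, -√3 m₃) / 2s` and `p₃ = (ε K, √3 m₂) / 2s`, where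
`A = (m₂ - m₃)m₃ + m₁(2m₂ + m₃)`. Since `2m₁s² = m₂A + m₃K`, the center of mass is the origin.
Using `m₁ + m₂ + m₃ = 1`, the sides `p₁p₂`, `p₂p₃`, `p₁p₃` are `(ε u, √3 v) / 2s` up to sign,
with `(u, v) = (2m₂ + m₃, m₃)`, `(m₂ - m₃, m₂ + m₃)`, `(m₂ + 2m₃, m₂)`; each satisfies
`u² + 3v² = 4s²`, so all three sides have length `1`.
-/

open Real

lemma sq_abs_div_self {K : ℝ} (hK : K ≠ 0) : (|K| / K) ^ 2 = 1 := by
  rw [div_pow, sq_abs, div_self (pow_ne_zero 2 hK)]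

lemma rpow_three_halves_eq_mul_sqrt {m : ℝ} (hm : 0 ≤ m) : m ^ ((3 : ℝ) / 2) = m * √m := by
  rw [rpow_div_two_eq_sqrt 3 hm, show (3 : ℝ) = (3 : ℕ) by norm_num, rpow_natCast, pow_succ,
    sq_sqrt hm]

lemma sqrt_pow_three_div {m : ℝ} (hm : 0 ≤ m) (S : ℝ) : √(m ^ 3 / S) = m * √m / √S := by
  rw [sqrt_div (by positivity), pow_succ, sqrt_mul (sq_nonneg m), sqrt_sq hm]

lemma norm_sq_eq_one_of_sq_add_three_mul_sq {s ε u v : ℝ} (hs : s ≠ 0) (hε : ε ^ 2 = 1)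
    (h : u ^ 2 + 3 * v ^ 2 = 4 * s ^ 2) : (ε * u / (2 * s)) ^ 2 + (√3 * v / (2 * s)) ^ 2 = 1 := by
  have h3 : √3 ^ 2 = 3 := sq_sqrt (by norm_num)
  field_simp
  linear_combination u ^ 2 * hε + v ^ 2 * h3 + h

section ReducedConfiguration

variable {m₁ m₂ m₃ s ε x₁ y₁ x₂ y₂ x₃ y₃ : ℝ}

theorem reduced_sides_eq_one (hsum : m₁ + m₂ + m₃ = 1) (hs : s ^ 2 = m₂ ^ 2 + m₂ * m₃ + m₃ ^ 2)
    (hs0 : s ≠ 0) (hε : ε ^ 2 = 1)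
    (hx₁ : x₁ = -ε * s) (hy₁ : y₁ = 0)
    (hx₂ : x₂ = ε * ((m₂ - m₃) * m₃ + m₁ * (2 * m₂ + m₃)) / (2 * s))
    (hy₂ : y₂ = -(√3 * m₃) / (2 * s))
    (hx₃ : x₃ = ε * (m₂ * (m₃ - m₂) + m₁ * (m₂ + 2 * m₃)) / (2 * s))
    (hy₃ : y₃ = √3 * m₂ / (2 * s)) :
    (x₁ - x₂) ^ 2 + (y₁ - y₂) ^ 2 = 1 ∧ (x₂ - x₃) ^ 2 + (y₂ - y₃) ^ 2 = 1 ∧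
      (x₁ - x₃) ^ 2 + (y₁ - y₃) ^ 2 = 1 := by
  subst hx₁ hy₁ hx₂ hy₂ hx₃ hy₃
  refine ⟨?_, ?_, ?_⟩
  · convert norm_sq_eq_one_of_sq_add_three_mul_sq (u := -(2 * m₂ + m₃)) (v := m₃) hs0 hε
      (by linear_combination -4 * hs) using 3
    · field_simp
      linear_combination (-ε * (2 * m₂ + m₃)) * hsum - 2 * ε * hs
    · ring
  · convert norm_sq_eq_one_of_sq_add_three_mul_sq (u := m₂ - m₃) (v := -(m₂ + m₃)) hs0 hε
      (by linear_combination -4 * hs) using 3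
    · field_simp
      linear_combination ε * (m₂ - m₃) * hsum
    · ring
  · convert norm_sq_eq_one_of_sq_add_three_mul_sq (u := -(m₂ + 2 * m₃)) (v := -m₂) hs0 hε
      (by linear_combination -4 * hs) using 3
    · field_simp
      linear_combination (-ε * (m₂ + 2 * m₃)) * hsum - 2 * ε * hs
    · ring

theorem reduced_center_of_mass_eq_zero (hs : s ^ 2 = m₂ ^ 2 + m₂ * m₃ + m₃ ^ 2) (hs0 : s ≠ 0)
    (hx₁ : x₁ = -ε * s) (hy₁ : y₁ = 0)
    (hx₂ : x₂ = ε * ((m₂ - m₃) * m₃ + m₁ * (2 * m₂ + m₃)) / (2 * s))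
    (hy₂ : y₂ = -(√3 * m₃) / (2 * s))
    (hx₃ : x₃ = ε * (m₂ * (m₃ - m₂) + m₁ * (m₂ + 2 * m₃)) / (2 * s))
    (hy₃ : y₃ = √3 * m₂ / (2 * s)) :
    m₁ * x₁ + m₂ * x₂ + m₃ * x₃ = 0 ∧ m₁ * y₁ + m₂ * y₂ + m₃ * y₃ = 0 := by
  subst hx₁ hy₁ hx₂ hy₂ hx₃ hy₃
  constructor
  · field_simp
    linear_combination -2 * ε * m₁ * hs
  · field_simp
    ring

end ReducedConfiguration

theorem crfbp_equilateral_configuration_general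
    (m₁ m₂ m₃ : ℝ) (h3 : 0 < m₃) (h23 : m₃ ≤ m₂)
    (hsum : m₁ + m₂ + m₃ = 1)
    (K : ℝ) (hK : K = m₂ * (m₃ - m₂) + m₁ * (m₂ + 2 * m₃)) (hK0 : K ≠ 0)
    (x₁ y₁ x₂ y₂ x₃ y₃ : ℝ)
    (hx₁ : x₁ = -|K| * Real.sqrt (m₂ ^ 2 + m₂ * m₃ + m₃ ^ 2) / K)
    (hy₁ : y₁ = 0)
    (hx₂ : x₂ = |K| * ((m₂ - m₃) * m₃ + m₁ * (2 * m₂ + m₃))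
      / (2 * K * Real.sqrt (m₂ ^ 2 + m₂ * m₃ + m₃ ^ 2)))
    (hy₂ : y₂ = -(Real.sqrt 3 * m₃) / (2 * m₂ ^ ((3:ℝ)/2))
      * Real.sqrt (m₂ ^ 3 / (m₂ ^ 2 + m₂ * m₃ + m₃ ^ 2)))
    (hx₃ : x₃ = |K| / (2 * Real.sqrt (m₂ ^ 2 + m₂ * m₃ + m₃ ^ 2)))
    (hy₃ : y₃ = Real.sqrt 3 / (2 * Real.sqrt m₂)
      * Real.sqrt (m₂ ^ 3 / (m₂ ^ 2 + m₂ * m₃ + m₃ ^ 2))) :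
    (Real.sqrt ((x₁ - x₂) ^ 2 + (y₁ - y₂) ^ 2)
        = Real.sqrt ((x₂ - x₃) ^ 2 + (y₂ - y₃) ^ 2) ∧
      Real.sqrt ((x₂ - x₃) ^ 2 + (y₂ - y₃) ^ 2)
        = Real.sqrt ((x₁ - x₃) ^ 2 + (y₁ - y₃) ^ 2)) ∧
    (m₁ * x₁ + m₂ * x₂ + m₃ * x₃ = 0 ∧ m₁ * y₁ + m₂ * y₂ + m₃ * y₃ = 0) := by
  have hm₂ : 0 < m₂ := h3.trans_le h23
  have hsm₂ : √m₂ ≠ 0 := (sqrt_pos.2 hm₂).ne'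
  rw [rpow_three_halves_eq_mul_sqrt hm₂.le, sqrt_pow_three_div hm₂.le] at hy₂
  rw [sqrt_pow_three_div hm₂.le] at hy₃
  have hS : 0 < m₂ ^ 2 + m₂ * m₃ + m₃ ^ 2 := by positivity
  have hs := sq_sqrt hS.le
  have hs0 : √(m₂ ^ 2 + m₂ * m₃ + m₃ ^ 2) ≠ 0 := (sqrt_pos.2 hS).ne'
  generalize √(m₂ ^ 2 + m₂ * m₃ + m₃ ^ 2) = s at *
  have hx₁' : x₁ = -(|K| / K) * s := by rw [hx₁]; ring
  have hx₂' : x₂ = |K| / K * ((m₂ - m₃) * m₃ + m₁ * (2 * m₂ + m₃)) / (2 * s) := by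
    rw [hx₂]; field_simp
  have hx₃' : x₃ = |K| / K * (m₂ * (m₃ - m₂) + m₁ * (m₂ + 2 * m₃)) / (2 * s) := by
    rw [hx₃, ← hK]; field_simp
  have hy₂' : y₂ = -(√3 * m₃) / (2 * s) := by
    rw [hy₂]; field_simp
  have hy₃' : y₃ = √3 * m₂ / (2 * s) := by
    rw [hy₃]; field_simp
  obtain ⟨h₁₂, h₂₃, h₁₃⟩ := reduced_sides_eq_one hsum hs hs0 (sq_abs_div_self hK0)
    hx₁' hy₁ hx₂' hy₂' hx₃' hy₃'
  refine ⟨⟨by rw [h₁₂, h₂₃], by rw [h₂₃, h₁₃]⟩, ?_⟩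
  exact reduced_center_of_mass_eq_zero hs hs0 hx₁' hy₁ hx₂' hy₂' hx₃' hy₃'

/-- Equilateral triangle property of the CRFBP primaries: with masses
`m₁ ≥ m₂ ≥ m₃ > 0` summing to `1` and positions given by the explicit formulas of
the paper, the three mutual distances are equal and the center of mass is the
origin. -/
theorem crfbp_equilateral_configuration
    (m₁ m₂ m₃ : ℝ) (h3 : 0 < m₃) (h23 : m₃ ≤ m₂) (h12 : m₂ ≤ m₁)
    (hsum : m₁ + m₂ + m₃ = 1)
    (K : ℝ) (hK : K = m₂ * (m₃ - m₂) + m₁ * (m₂ + 2 * m₃)) (hK0 : K ≠ 0)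
    (x₁ y₁ x₂ y₂ x₃ y₃ : ℝ)
    (hx₁ : x₁ = -|K| * Real.sqrt (m₂ ^ 2 + m₂ * m₃ + m₃ ^ 2) / K)
    (hy₁ : y₁ = 0)
    (hx₂ : x₂ = |K| * ((m₂ - m₃) * m₃ + m₁ * (2 * m₂ + m₃))
      / (2 * K * Real.sqrt (m₂ ^ 2 + m₂ * m₃ + m₃ ^ 2)))
    (hy₂ : y₂ = -(Real.sqrt 3 * m₃) / (2 * m₂ ^ ((3:ℝ)/2))
      * Real.sqrt (m₂ ^ 3 / (m₂ ^ 2 + m₂ * m₃ + m₃ ^ 2)))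
    (hx₃ : x₃ = |K| / (2 * Real.sqrt (m₂ ^ 2 + m₂ * m₃ + m₃ ^ 2)))
    (hy₃ : y₃ = Real.sqrt 3 / (2 * Real.sqrt m₂)
      * Real.sqrt (m₂ ^ 3 / (m₂ ^ 2 + m₂ * m₃ + m₃ ^ 2))) :
    (Real.sqrt ((x₁ - x₂) ^ 2 + (y₁ - y₂) ^ 2)
        = Real.sqrt ((x₂ - x₃) ^ 2 + (y₂ - y₃) ^ 2) ∧
      Real.sqrt ((x₂ - x₃) ^ 2 + (y₂ - y₃) ^ 2)
        = Real.sqrt ((x₁ - x₃) ^ 2 + (y₁ - y₃) ^ 2)) ∧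
    (m₁ * x₁ + m₂ * x₂ + m₃ * x₃ = 0 ∧ m₁ * y₁ + m₂ * y₂ + m₃ * y₃ = 0) :=
  crfbp_equilateral_configuration_general m₁ m₂ m₃ h3 h23 hsum K hK hK0 x₁ y₁ x₂ y₂ x₃ y₃ hx₁ hy₁
    hx₂ hy₂ hx₃ hy₃
end
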